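/- There exist $\alpha_0\in(0,a_0)$ and $C>0$ such that for all $\alpha\in(0,\alpha_0)$ and all $x$ on the boundary of the curved rectangle $\Pi(\alpha)=\Phi(P(\alpha))$ one has $d(x,\gamma)\ge\alpha-C\alpha^2$. -/

import Mathlib

/-!
Write `Φ(s, t) = Γ(s) + t n(s)` and `ρ = √(t² + (u - s)²)`. Taylor's formula with
`‖Γ''‖ = |κ| ≤ K` gives `|Φ(s, t) - Γ(u)| ≥ ρ - K (u - s)² ≥ ρ - K ρ²`, since
`t n(s) - (u - s) Γ'(s)` has length `ρ` in the orthonormal frame `(Γ', n)`. If `(s, t)` lies on the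
boundary of the enlarged rectangle `[-α, L + α] × [-α, α]` and `u ∈ (0, L)`, then `ρ ≥ α`, and as
`ρ ↦ ρ - K ρ²` is increasing for small `ρ`, the distance is at least `α - K α²` whenever `|u - s|`
is small. For `|u - s| ≥ δ`, injectivity of `Γ` on a compact interval gives `|Γ(s) - Γ(u)| ≥ ε`,
which beats `|t| ≤ α` once `α ≤ ε / 2`.

Every boundary point of `Φ(P(α))` is the image of a boundary point of the rectangle because `Φ` is
continuous and, as `|t κ| < 1`, a local diffeomorphism on the open rectangle, hence open there by
the inverse function theorem.
-/

open Set Filter Topology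

local notation "ℝ²" => EuclideanSpace ℝ (Fin 2)

lemma EuclideanSpace.norm_sq_fin_two (x : ℝ²) : ‖x‖ ^ 2 = x 0 ^ 2 + x 1 ^ 2 := by
  simp [EuclideanSpace.norm_sq_eq, Fin.sum_univ_two]

lemma EuclideanSpace.real_inner_fin_two (x y : ℝ²) : inner ℝ x y = x 0 * y 0 + x 1 * y 1 := by
  simp [PiLp.inner_apply, Fin.sum_univ_two, mul_comm]

noncomputable def rightAngleRot : ℝ² →L[ℝ] ℝ² :=
  LinearMap.toContinuousLinearMap
    { toFun := fun x => !₂[-x 1, x 0]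
      map_add' := fun x y => by ext i; fin_cases i <;> simp [add_comm]
      map_smul' := fun c x => by ext i; fin_cases i <;> simp }

@[simp] lemma rightAngleRot_apply_zero (x : ℝ²) : rightAngleRot x 0 = -x 1 := rfl

@[simp] lemma rightAngleRot_apply_one (x : ℝ²) : rightAngleRot x 1 = x 0 := rfl

lemma rightAngleRot_rightAngleRot (x : ℝ²) : rightAngleRot (rightAngleRot x) = -x := by
  ext i; fin_cases i <;> simp

lemma norm_rightAngleRot (x : ℝ²) : ‖rightAngleRot x‖ = ‖x‖ := by
  rw [← sq_eq_sq₀ (norm_nonneg _) (norm_nonneg _), EuclideanSpace.norm_sq_fin_two,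
    EuclideanSpace.norm_sq_fin_two]
  simp only [rightAngleRot_apply_zero, rightAngleRot_apply_one, neg_sq]; ring

lemma eq_inner_smul_add_inner_rightAngleRot_smul {e : ℝ²} (he : ‖e‖ = 1) (w : ℝ²) :
    w = inner ℝ e w • e + inner ℝ (rightAngleRot e) w • rightAngleRot e := by
  have he' : e 0 ^ 2 + e 1 ^ 2 = 1 := by rw [← EuclideanSpace.norm_sq_fin_two, he, one_pow]
  ext i; fin_cases i <;> simp [EuclideanSpace.real_inner_fin_two] <;>
    linear_combination (-w _) * he'

lemma norm_smul_add_smul_rightAngleRot {e : ℝ²} (he : ‖e‖ = 1) (a b : ℝ) :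
    ‖a • e + b • rightAngleRot e‖ = √(a ^ 2 + b ^ 2) := by
  have he' : e 0 ^ 2 + e 1 ^ 2 = 1 := by rw [← EuclideanSpace.norm_sq_fin_two, he, one_pow]
  rw [← Real.sqrt_sq (norm_nonneg _), EuclideanSpace.norm_sq_fin_two]
  congr 1
  simp only [PiLp.add_apply, PiLp.smul_apply, smul_eq_mul, rightAngleRot_apply_zero,
    rightAngleRot_apply_one]
  linear_combination (a ^ 2 + b ^ 2) * he'

lemma inner_eq_zero_of_norm_eq_of_hasDerivAt {F : Type*} [NormedAddCommGroup F]
    [InnerProductSpace ℝ F] {f : ℝ → F} {f' : F} {c s : ℝ} (hf : ∀ t, ‖f t‖ = c)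
    (hd : HasDerivAt f f' s) : inner ℝ (f s) f' = 0 := by
  have hconst : (fun t => inner ℝ (f t) (f t)) = fun _ => c ^ 2 := by
    funext t; rw [real_inner_self_eq_norm_sq, hf]
  have h := (hd.inner ℝ hd).unique (hconst ▸ hasDerivAt_const s (c ^ 2))
  rw [real_inner_comm (f s) f'] at h
  linarith

lemma Set.OrdConnected.norm_sub_sub_smul_le {E : Type*} [NormedAddCommGroup E]
    [NormedSpace ℝ E] {f f' f'' : ℝ → E} {I : Set ℝ} {K a b : ℝ} (hI : I.OrdConnected)
    (hf : ∀ x ∈ I, HasDerivWithinAt f (f' x) I x)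
    (hf' : ∀ x ∈ I, HasDerivWithinAt f' (f'' x) I x) (hK : ∀ x ∈ I, ‖f'' x‖ ≤ K)
    (ha : a ∈ I) (hb : b ∈ I) : ‖f b - f a - (b - a) • f' a‖ ≤ K * (b - a) ^ 2 := by
  have hJ : uIcc a b ⊆ I := hI.uIcc_subset ha hb
  have hf'_lip : ∀ x ∈ uIcc a b, ‖f' x - f' a‖ ≤ K * |b - a| := fun x hx =>
    calc ‖f' x - f' a‖ ≤ K * ‖x - a‖ :=
          hI.convex.norm_image_sub_le_of_norm_hasDerivWithin_le hf' hK ha (hJ hx)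
      _ ≤ K * |b - a| := by
          have hK₀ : 0 ≤ K := (norm_nonneg _).trans (hK a ha)
          gcongr
          exact abs_sub_left_of_mem_uIcc hx
  have hg : ∀ x ∈ uIcc a b, HasDerivWithinAt (fun x => f x - f a - (x - a) • f' a)
      (f' x - f' a) (uIcc a b) x := fun x hx => by
    have := (((hf x (hJ hx)).mono hJ).sub_const (f a)).sub
      (((hasDerivWithinAt_id x _).sub_const a).smul_const (f' a))
    rwa [one_smul] at this
  have := (convex_uIcc a b).norm_image_sub_le_of_norm_hasDerivWithin_le hg hf'_lip
    left_mem_uIcc right_mem_uIcc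
  simpa [Real.norm_eq_abs, mul_assoc, ← sq_abs (b - a), sq] using this

lemma IsCompact.exists_pos_le_dist_of_injOn {X Y : Type*} [PseudoMetricSpace X]
    [MetricSpace Y] {f : X → Y} {S : Set X} (hS : IsCompact S) (hf : ContinuousOn f S)
    (hinj : InjOn f S) {δ : ℝ} (hδ : 0 < δ) :
    ∃ ε > 0, ∀ x ∈ S, ∀ y ∈ S, δ ≤ dist x y → ε ≤ dist (f x) (f y) := by
  let D := (S ×ˢ S) ∩ {q | δ ≤ dist q.1 q.2}
  have hD : IsCompact D := (hS.prod hS).inter_right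
    (isClosed_le continuous_const (continuous_fst.dist continuous_snd))
  have hfD : ContinuousOn (fun q : X × X => dist (f q.1) (f q.2)) D :=
    continuous_dist.comp_continuousOn <|
      (hf.comp continuousOn_fst fun _ hq => hq.1.1).prodMk
        (hf.comp continuousOn_snd fun _ hq => hq.1.2)
  obtain ⟨ε, hε, hεD⟩ := hD.exists_forall_le' hfD (a := 0) fun q hq =>
    dist_pos.mpr fun h => by
      have hδq : δ ≤ dist q.1 q.2 := hq.2
      rw [hinj hq.1.1 hq.1.2 h, dist_self] at hδq
      exact hδq.not_gt hδ
  exact ⟨ε, hε, fun x hx y hy hxy => hεD (x, y) ⟨⟨hx, hy⟩, hxy⟩⟩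

lemma frontier_image_subset_image_diff {X Y : Type*} [TopologicalSpace X] [TopologicalSpace Y]
    [T2Space Y] {f : X → Y} {U C : Set X} (hC : IsCompact C) (hUC : U ⊆ C)
    (hf : ContinuousOn f C) (hU : IsOpen (f '' U)) : frontier (f '' U) ⊆ f '' (C \ U) := by
  rintro y ⟨hy, hyU⟩
  rw [hU.interior_eq] at hyU
  obtain ⟨x, hx, rfl⟩ :=
    closure_minimal (image_mono hUC) (hC.image_of_continuousOn hf).isClosed hy
  exact ⟨x, ⟨hx, fun hxU => hyU ⟨x, hxU, rfl⟩⟩, rfl⟩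

lemma sq_le_sq_add_sq_of_mem_diff {L α u : ℝ} {p : ℝ × ℝ}
    (hp : p ∈ Icc (-α) (L + α) ×ˢ Icc (-α) α \ Ioo (-α) (L + α) ×ˢ Ioo (-α) α)
    (hu : u ∈ Icc 0 L) : α ^ 2 ≤ p.2 ^ 2 + (u - p.1) ^ 2 := by
  obtain ⟨⟨⟨hs₁, hs₂⟩, ht₁, ht₂⟩, hnot⟩ := hp
  simp only [mem_prod, mem_Ioo, not_and_or, not_lt] at hnot
  rcases hnot with (h | h) | (h | h) <;> nlinarith [hu.1, hu.2]

noncomputable def curvature (Γ : ℝ → ℝ²) (s : ℝ) : ℝ :=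
  inner ℝ (rightAngleRot (deriv Γ s)) (deriv (deriv Γ) s)

noncomputable def tubeMap (Γ : ℝ → ℝ²) (p : ℝ × ℝ) : ℝ² :=
  Γ p.1 + p.2 • rightAngleRot (deriv Γ p.1)

lemma continuous_tubeMap {Γ : ℝ → ℝ²} (hΓ : ContDiff ℝ 1 Γ) : Continuous (tubeMap Γ) :=
  (hΓ.continuous.comp continuous_fst).add (continuous_snd.smul
    (rightAngleRot.continuous.comp ((hΓ.continuous_deriv le_rfl).comp continuous_fst)))

section UnitSpeed

variable {Γ : ℝ → ℝ²} (hΓ : ContDiff ℝ 2 Γ) (hunit : ∀ s, ‖deriv Γ s‖ = 1)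
include hΓ hunit

lemma deriv_deriv_eq_curvature_smul (s : ℝ) :
    deriv (deriv Γ) s = curvature Γ s • rightAngleRot (deriv Γ s) := by
  have hd : HasDerivAt (deriv Γ) (deriv (deriv Γ) s) s :=
    ((hΓ.iterate_deriv' 1 1).differentiable one_ne_zero s).hasDerivAt
  have horth := inner_eq_zero_of_norm_eq_of_hasDerivAt hunit hd
  conv_lhs => rw [eq_inner_smul_add_inner_rightAngleRot_smul (hunit s) (deriv (deriv Γ) s)]
  rw [horth, zero_smul, zero_add, curvature]

lemma norm_deriv_deriv (s : ℝ) : ‖deriv (deriv Γ) s‖ = |curvature Γ s| := by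
  rw [deriv_deriv_eq_curvature_smul hΓ hunit, norm_smul, norm_rightAngleRot, hunit, mul_one,
    Real.norm_eq_abs]

lemma hasStrictFDerivAt_tubeMap (p : ℝ × ℝ) :
    HasStrictFDerivAt (tubeMap Γ)
      ((ContinuousLinearMap.fst ℝ ℝ ℝ).smulRight ((1 - p.2 * curvature Γ p.1) • deriv Γ p.1) +
        (ContinuousLinearMap.snd ℝ ℝ ℝ).smulRight (rightAngleRot (deriv Γ p.1))) p := by
  have hΓs : HasStrictDerivAt Γ (deriv Γ p.1) p.1 := hΓ.hasStrictDerivAt two_ne_zero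
  have hns : HasStrictDerivAt (fun s => rightAngleRot (deriv Γ s))
      (-curvature Γ p.1 • deriv Γ p.1) p.1 := by
    have hΓ' : ContDiff ℝ 1 (deriv Γ) := hΓ.iterate_deriv' 1 1
    have := rightAngleRot.hasStrictFDerivAt.comp_hasStrictDerivAt p.1
      (hΓ'.hasStrictDerivAt one_ne_zero)
    rwa [deriv_deriv_eq_curvature_smul hΓ hunit, map_smul, rightAngleRot_rightAngleRot,
      smul_neg, ← neg_smul] at this
  have := (hΓs.hasStrictFDerivAt.comp p hasStrictFDerivAt_fst).add
    (hasStrictFDerivAt_snd.smul (hns.hasStrictFDerivAt.comp p hasStrictFDerivAt_fst))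
  refine this.congr_fderiv (ContinuousLinearMap.ext fun v => ?_)
  simp only [add_apply, ContinuousLinearMap.smulRight_apply, ContinuousLinearMap.coe_fst',
    ContinuousLinearMap.coe_snd', ContinuousLinearMap.comp_apply, smul_apply,
    ContinuousLinearMap.toSpanSingleton_apply]
  module

lemma map_tubeMap_nhds {p : ℝ × ℝ} (hp : p.2 * curvature Γ p.1 ≠ 1) :
    map (tubeMap Γ) (𝓝 p) = 𝓝 (tubeMap Γ p) := by
  refine (hasStrictFDerivAt_tubeMap hΓ hunit p).map_nhds_eq_of_surj
    (LinearMap.range_eq_top.mpr fun w => ?_)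
  have hp' : 1 - p.2 * curvature Γ p.1 ≠ 0 := sub_ne_zero.mpr hp.symm
  refine ⟨(inner ℝ (deriv Γ p.1) w / (1 - p.2 * curvature Γ p.1),
    inner ℝ (rightAngleRot (deriv Γ p.1)) w), ?_⟩
  conv_rhs => rw [eq_inner_smul_add_inner_rightAngleRot_smul (hunit p.1) w]
  simp [smul_smul, div_mul_cancel₀ _ hp']

lemma frontier_tubeMap_image_subset {L α : ℝ}
    (hκ : ∀ s ∈ Ioo (-α) (L + α), α * |curvature Γ s| ≤ 1) :
    frontier (tubeMap Γ '' (Ioo (-α) (L + α) ×ˢ Ioo (-α) α)) ⊆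
      tubeMap Γ '' (Icc (-α) (L + α) ×ˢ Icc (-α) α \ Ioo (-α) (L + α) ×ˢ Ioo (-α) α) := by
  refine frontier_image_subset_image_diff (isCompact_Icc.prod isCompact_Icc)
    (prod_mono Ioo_subset_Icc_self Ioo_subset_Icc_self)
    (continuous_tubeMap (hΓ.of_le one_le_two)).continuousOn ?_
  rw [isOpen_iff_mem_nhds]
  rintro _ ⟨p, hp, rfl⟩
  have hp₁ : p.2 * curvature Γ p.1 ≠ 1 := fun h => by
    have hprod : |p.2| * |curvature Γ p.1| = 1 := by rw [← abs_mul, h, abs_one]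
    have hκ₀ : 0 < |curvature Γ p.1| := abs_pos.mpr fun h₀ => by simp [h₀] at hprod
    linarith [hκ p.1 hp.1, mul_lt_mul_of_pos_right (abs_lt.mpr hp.2) hκ₀]
  rw [← map_tubeMap_nhds hΓ hunit hp₁]
  exact image_mem_map ((isOpen_Ioo.prod isOpen_Ioo).mem_nhds hp)

lemma sqrt_sub_le_norm_tubeMap_sub {I : Set ℝ} (hI : I.OrdConnected) {K : ℝ}
    (hK : ∀ x ∈ I, ‖deriv (deriv Γ) x‖ ≤ K) {s u : ℝ} (hs : s ∈ I) (hu : u ∈ I) (t : ℝ) :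
    √(t ^ 2 + (u - s) ^ 2) - K * (u - s) ^ 2 ≤ ‖tubeMap Γ (s, t) - Γ u‖ := by
  have hd : ∀ x, HasDerivAt Γ (deriv Γ x) x := fun x =>
    (hΓ.differentiable two_ne_zero x).hasDerivAt
  have hd' : ∀ x, HasDerivAt (deriv Γ) (deriv (deriv Γ) x) x := fun x =>
    ((hΓ.iterate_deriv' 1 1).differentiable one_ne_zero x).hasDerivAt
  have htaylor := hI.norm_sub_sub_smul_le (fun x _ => (hd x).hasDerivWithinAt)
    (fun x _ => (hd' x).hasDerivWithinAt) hK hs hu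
  have hframe : ‖-(u - s) • deriv Γ s + t • rightAngleRot (deriv Γ s)‖ =
      √(t ^ 2 + (u - s) ^ 2) := by
    rw [norm_smul_add_smul_rightAngleRot (hunit s), neg_sq, add_comm]
  have hsplit : tubeMap Γ (s, t) - Γ u =
      (-(u - s) • deriv Γ s + t • rightAngleRot (deriv Γ s)) -
        (Γ u - Γ s - (u - s) • deriv Γ s) := by
    simp only [tubeMap, neg_smul]; abel
  rw [hsplit, ← hframe]
  linarith [norm_sub_norm_le (-(u - s) • deriv Γ s + t • rightAngleRot (deriv Γ s))
    (Γ u - Γ s - (u - s) • deriv Γ s)]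

lemma sub_mul_sq_le_dist_tubeMap {I : Set ℝ} (hI : I.OrdConnected) {K δ ε α : ℝ}
    (hK : ∀ x ∈ I, ‖deriv (deriv Γ) x‖ ≤ K)
    (hsep : ∀ s ∈ I, ∀ u ∈ I, δ ≤ dist s u → ε ≤ dist (Γ s) (Γ u))
    (hKδ : K * (3 * δ) ≤ 1) (hαδ : α ≤ δ) (hαε : 2 * α ≤ ε) {s t u : ℝ} (hs : s ∈ I)
    (hu : u ∈ I) (ht : |t| ≤ α) (hα : α ^ 2 ≤ t ^ 2 + (u - s) ^ 2) :
    α - K * α ^ 2 ≤ dist (tubeMap Γ (s, t)) (Γ u) := by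
  have hK₀ : 0 ≤ K := (norm_nonneg _).trans (hK s hs)
  have hα₀ : 0 ≤ α := (abs_nonneg t).trans ht
  rcases le_or_gt δ (dist s u) with hfar | hnear
  · have hnormal : dist (Γ s) (tubeMap Γ (s, t)) = |t| := by
      rw [tubeMap, dist_self_add_right, norm_smul, norm_rightAngleRot, hunit, mul_one,
        Real.norm_eq_abs]
    have hε := (hsep s hs u hu hfar).trans (dist_triangle _ (tubeMap Γ (s, t)) _)
    nlinarith
  · set ρ := √(t ^ 2 + (u - s) ^ 2)
    have hαρ : α ≤ ρ := Real.le_sqrt_of_sq_le hα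
    have hρδ : ρ ≤ α + δ := by
      rw [Real.dist_eq, abs_sub_comm] at hnear
      refine Real.sqrt_le_iff.mpr ⟨by linarith, ?_⟩
      nlinarith [sq_abs t, sq_abs (u - s), abs_nonneg t, abs_nonneg (u - s)]
    have hmono : α - K * α ^ 2 ≤ ρ - K * ρ ^ 2 := by
      have hKαρ : K * (α + ρ) ≤ 1 := by nlinarith
      nlinarith [mul_nonneg (sub_nonneg.mpr hαρ) (sub_nonneg.mpr hKαρ)]
    have hρsq : (u - s) ^ 2 ≤ ρ ^ 2 := by
      rw [Real.sq_sqrt (by positivity)]; nlinarith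
    rw [dist_eq_norm]
    nlinarith [sqrt_sub_le_norm_tubeMap_sub hΓ hunit hI hK hs hu t]

end UnitSpeed

theorem dist_from_boundary_of_tube_general
    (L l₀ a₀ K : ℝ) (hL : 0 < L)
    (Γ : ℝ → EuclideanSpace ℝ (Fin 2))
    (hΓ : ContDiff ℝ 4 Γ)
    (hunit : ∀ s, ‖deriv Γ s‖ = 1)
    (hinj : Set.InjOn Γ (Set.Icc (-l₀) (L + l₀)))
    (n : ℝ → EuclideanSpace ℝ (Fin 2))
    (hn : ∀ s, n s 0 = -(deriv Γ s 1) ∧ n s 1 = deriv Γ s 0)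
    (κ : ℝ → ℝ)
    (hκ : ∀ s, κ s = deriv Γ s 0 * deriv (deriv Γ) s 1 - deriv (deriv Γ) s 0 * deriv Γ s 1)
    (hK : ∀ s ∈ Set.Icc (-l₀) (L + l₀), |κ s| ≤ K)
    (Φ : ℝ × ℝ → EuclideanSpace ℝ (Fin 2))
    (hΦ : ∀ p : ℝ × ℝ, Φ p = Γ p.1 + p.2 • n p.1)
    (ha₀ : 0 < a₀) (ha₀K : 2 * K * a₀ < 1) (ha₀l : a₀ < l₀) :
    ∃ α₀, 0 < α₀ ∧ α₀ < a₀ ∧ ∃ C > 0, ∀ α : ℝ, 0 < α → α < α₀ →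
      ∀ x ∈ frontier (Φ '' (Set.Ioo (-α) (L + α) ×ˢ Set.Ioo (-α) α)),
        α - C * α ^ 2 ≤ Metric.infDist x (Γ '' Set.Ioo 0 L) := by
  have hΓ₂ : ContDiff ℝ 2 Γ := hΓ.of_le (by norm_num)
  obtain rfl : Φ = tubeMap Γ := funext fun p => by
    rw [hΦ, tubeMap]; congr 2; ext i; fin_cases i <;> simp [hn]
  obtain rfl : κ = curvature Γ := funext fun s => by
    rw [hκ, curvature, EuclideanSpace.real_inner_fin_two, rightAngleRot_apply_zero,
      rightAngleRot_apply_one]; ring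
  have hK₀ : 0 ≤ K := (abs_nonneg _).trans (hK 0 ⟨by linarith, by linarith⟩)
  have hΓ'' : ∀ s ∈ Icc (-l₀) (L + l₀), ‖deriv (deriv Γ) s‖ ≤ K := fun s hs =>
    (norm_deriv_deriv hΓ₂ hunit s).trans_le (hK s hs)
  obtain ⟨δ, hδ, hKδ⟩ : ∃ δ > 0, K * (3 * δ) ≤ 1 := ⟨(3 * K + 1)⁻¹, by positivity, by
    rw [← mul_assoc, ← div_eq_mul_inv]; exact div_le_one_of_le₀ (by linarith) (by positivity)⟩
  obtain ⟨ε, hε, hsep⟩ := isCompact_Icc.exists_pos_le_dist_of_injOn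
    hΓ.continuous.continuousOn hinj hδ
  refine ⟨min (a₀ / 2) (min δ (ε / 2)), by positivity, by simp [ha₀], K + 1, by positivity, ?_⟩
  intro α hα hαα₀ x hx
  obtain ⟨hαa₀, hαδ, hαε⟩ : α < a₀ / 2 ∧ α < δ ∧ α < ε / 2 := by
    simpa only [lt_min_iff] using hαα₀
  have hI : ∀ s ∈ Icc (-α) (L + α), s ∈ Icc (-l₀) (L + l₀) := fun s hs =>
    ⟨by linarith [hs.1], by linarith [hs.2]⟩
  obtain ⟨⟨s, t⟩, hst, rfl⟩ := frontier_tubeMap_image_subset hΓ₂ hunit (fun s hs => by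
    nlinarith [hK s (hI s (Ioo_subset_Icc_self hs)), abs_nonneg (curvature Γ s)]) hx
  rw [Metric.le_infDist ((nonempty_Ioo.mpr hL).image Γ)]
  rintro _ ⟨u, hu, rfl⟩
  have hbound := sub_mul_sq_le_dist_tubeMap hΓ₂ hunit ordConnected_Icc hΓ'' hsep hKδ hαδ.le
    (by linarith) (hI s hst.1.1) (hI u ⟨by linarith [hu.1], by linarith [hu.2]⟩)
    (abs_le.mpr hst.1.2) (sq_le_sq_add_sq_of_mem_diff hst (Ioo_subset_Icc_self hu))
  nlinarith

theorem dist_from_boundary_of_tube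
    (L l₀ a₀ K : ℝ) (hL : 0 < L) (hl₀ : 0 < l₀)
    (Γ : ℝ → EuclideanSpace ℝ (Fin 2))
    (hΓ : ContDiff ℝ 4 Γ)
    (hunit : ∀ s, ‖deriv Γ s‖ = 1)
    (hinj : Set.InjOn Γ (Set.Icc (-l₀) (L + l₀)))
    (n : ℝ → EuclideanSpace ℝ (Fin 2))
    (hn : ∀ s, n s 0 = -(deriv Γ s 1) ∧ n s 1 = deriv Γ s 0)
    (κ : ℝ → ℝ)
    (hκ : ∀ s, κ s = deriv Γ s 0 * deriv (deriv Γ) s 1 - deriv (deriv Γ) s 0 * deriv Γ s 1)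
    (hK : ∀ s ∈ Set.Icc (-l₀) (L + l₀), |κ s| ≤ K)
    (Φ : ℝ × ℝ → EuclideanSpace ℝ (Fin 2))
    (hΦ : ∀ p : ℝ × ℝ, Φ p = Γ p.1 + p.2 • n p.1)
    (ha₀ : 0 < a₀) (ha₀K : 2 * K * a₀ < 1) (ha₀l : a₀ < l₀)
    (hdiff : Set.InjOn Φ (Set.Ioo (-a₀) (L + a₀) ×ˢ Set.Ioo (-a₀) a₀)) :
    ∃ α₀, 0 < α₀ ∧ α₀ < a₀ ∧ ∃ C > 0, ∀ α : ℝ, 0 < α → α < α₀ →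
      ∀ x ∈ frontier (Φ '' (Set.Ioo (-α) (L + α) ×ˢ Set.Ioo (-α) α)),
        α - C * α ^ 2 ≤ Metric.infDist x (Γ '' Set.Ioo 0 L) :=
  dist_from_boundary_of_tube_general L l₀ a₀ K hL Γ hΓ hunit hinj n hn κ hκ hK Φ hΦ ha₀ ha₀K ha₀l
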